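/- arXiv:1410.4638 — 2 statements merged into one kernel-verified Lean document; each statement's English description precedes it below -/
import Mathlib

section
/- Let $\chi \colon E^\times \to \mathbb{C}^\times$ be a group homomorphism trivial on $\mathbb{Q}_p^\times$ with conductor exponent $n > 1$. For an integer $k$ with $0 \le k \le n$, let $S_k$ denote the sum $\sum_b \chi(1+b\theta)^{-1}$ taken over a complete set of representatives $b$ of $\mathbb{Z}_p/p^n\mathbb{Z}_p$ with $\mathrm{ord}_p(b) = k$ (where, for $k = n$, the condition means $b \equiv 0 \bmod p^n$). Then $S_k = 0$ if $k < n-1$, $S_{n-1} = -1$, and $S_n = 1$. -/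
open scoped Classical

namespace ArakawaQuad

variable (p : ℕ) [Fact p.Prime]
variable (E : Type*) [Field E] [Algebra ℚ_[p] E] [Algebra ℤ_[p] E]
  [IsScalarTower ℤ_[p] ℚ_[p] E]

/-- Membership in `𝒪_{E,i} = ℤ_p + p^i 𝒪_E`, where `𝒪_E` is the ring of integers
(the integral closure of `ℤ_p` in `E`). -/
def MemOEi (i : ℕ) (z : E) : Prop :=
  ∃ a : ℤ_[p], ∃ w ∈ integralClosure ℤ_[p] E, z = algebraMap ℤ_[p] E a + (p : E) ^ i * w

/-- Membership of a unit `u ∈ Eˣ` in `𝒪_{E,i}^× = 𝒪_{E,i} ∩ 𝒪_E^×`. -/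
def MemOEiUnits (i : ℕ) (u : Eˣ) : Prop :=
  MemOEi p E i ↑u ∧ (↑u : E) ∈ integralClosure ℤ_[p] E ∧
    ((↑u⁻¹ : E) ∈ integralClosure ℤ_[p] E)

/-- `χ : E^× → ℂ^×` is trivial on `ℚ_p^×`. -/
def TrivialOnQp (χ : Eˣ →* ℂˣ) : Prop :=
  ∀ t : ℚ_[p]ˣ, χ (Units.map (algebraMap ℚ_[p] E).toMonoidHom t) = 1

/-- `χ` has conductor exponent `n`: it is trivial on `𝒪_{E,n}^×` and, when `n > 0`,
nontrivial on `𝒪_{E,n-1}^×`. -/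
def CondExp (χ : Eˣ →* ℂˣ) (n : ℕ) : Prop :=
  (∀ u : Eˣ, MemOEiUnits p E n u → χ u = 1) ∧
  (0 < n → ∃ u : Eˣ, MemOEiUnits p E (n - 1) u ∧ χ u ≠ 1)

/-- The value of `χ : E^× → ℂ^×` at an element of `E`, with junk value `0` at `0`. -/
noncomputable def chiV {F : Type*} [Field F] (χ : Fˣ →* ℂˣ) (z : F) : ℂ :=
  if h : z ≠ 0 then (χ (Units.mk0 z h) : ℂ) else 0

/-- `E` is an unramified quadratic extension of `ℚ_p`: it has degree `2` and the
maximal ideal of its ring of integers `𝒪_E` is `p 𝒪_E` (an element of `𝒪_E` is a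
unit of `𝒪_E` if and only if it does not lie in `p 𝒪_E`). -/
def Unramified : Prop :=
  Module.finrank ℚ_[p] E = 2 ∧
  ∀ z ∈ integralClosure ℤ_[p] E,
    ((∃ w ∈ integralClosure ℤ_[p] E, z * w = 1) ↔
      ¬ ∃ w ∈ integralClosure ℤ_[p] E, z = (p : E) * w)

/-- `E` is a ramified quadratic extension of `ℚ_p` with maximal ideal `𝔭 = θ 𝒪_E`
satisfying `𝔭² = p 𝒪_E`: it has degree `2`, `θ ∈ 𝒪_E` generates the maximal ideal
(an element of `𝒪_E` is a unit of `𝒪_E` iff it is not in `θ 𝒪_E`), and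
`θ² = p u` for a unit `u` of `𝒪_E`. -/
def Ramified (θ : E) : Prop :=
  Module.finrank ℚ_[p] E = 2 ∧
  θ ∈ integralClosure ℤ_[p] E ∧
  (∀ z ∈ integralClosure ℤ_[p] E,
    ((∃ w ∈ integralClosure ℤ_[p] E, z * w = 1) ↔
      ¬ ∃ w ∈ integralClosure ℤ_[p] E, z = θ * w)) ∧
  (∃ u ∈ integralClosure ℤ_[p] E,
    (∃ v ∈ integralClosure ℤ_[p] E, u * v = 1) ∧ θ ^ 2 = (p : E) * u)

/-- `{1, θ}` is a `ℤ_p`-basis of the ring of integers `𝒪_E`. -/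
def IsIntBasis (θ : E) : Prop :=
  θ ∈ integralClosure ℤ_[p] E ∧
  ∀ z ∈ integralClosure ℤ_[p] E, ∃! ab : ℤ_[p] × ℤ_[p],
    z = algebraMap ℤ_[p] E ab.1 + algebraMap ℤ_[p] E ab.2 * θ

/-- `x` lies in the double coset `ℚ_p^× y 𝒪_{E,i}^×` inside `E^×`. -/
def InCoset (i : ℕ) (y x : E) : Prop :=
  ∃ t : ℚ_[p]ˣ, ∃ u : Eˣ, MemOEiUnits p E i u ∧
    x = algebraMap ℚ_[p] E ↑t * y * ↑u

/-- The unit group `𝒪_E^×`, as a subgroup of `E^×`. -/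
def OEUnits : Subgroup Eˣ where
  carrier := {u | (↑u : E) ∈ integralClosure ℤ_[p] E ∧
    ((↑u⁻¹ : E) ∈ integralClosure ℤ_[p] E)}
  one_mem' := ⟨by simpa using (integralClosure ℤ_[p] E).one_mem,
    by simpa using (integralClosure ℤ_[p] E).one_mem⟩
  mul_mem' := by
    rintro a b ⟨ha1, ha2⟩ ⟨hb1, hb2⟩
    refine ⟨?_, ?_⟩
    · simpa [Units.val_mul] using mul_mem ha1 hb1
    · simpa [Units.val_mul, mul_inv_rev] using mul_mem hb2 ha2
  inv_mem' := by
    rintro a ⟨h1, h2⟩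
    exact ⟨h2, by simpa using h1⟩

end ArakawaQuad

open ArakawaQuad

section Dev
namespace Lem382
set_option linter.unusedSectionVars false

variable {p : ℕ} [Fact p.Prime]
variable {E : Type*} [Field E] [Algebra ℚ_[p] E] [Algebra ℤ_[p] E]
  [IsScalarTower ℤ_[p] ℚ_[p] E]

lemma aMemIC (a : ℤ_[p]) : algebraMap ℤ_[p] E a ∈ integralClosure ℤ_[p] E :=
  Subalgebra.algebraMap_mem _ a

lemma pCast (i : ℕ) : ((p : E)) ^ i = algebraMap ℤ_[p] E ((p : ℤ_[p]) ^ i) := by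
  rw [map_pow, map_natCast]

/-- `1 + bθ` as an element of `E`. -/
noncomputable def vE (θ : E) (b : ℤ_[p]) : E := 1 + algebraMap ℤ_[p] E b * θ

lemma vE_mem (θ : E) (hθ : θ ∈ integralClosure ℤ_[p] E) (b : ℤ_[p]) :
    vE θ b ∈ integralClosure ℤ_[p] E := by
  exact Subalgebra.add_mem _ (Subalgebra.one_mem _) (Subalgebra.mul_mem _ (aMemIC b) hθ)

lemma one_not_theta (θ : E) (hE : ArakawaQuad.Ramified p E θ) :
    ¬ ∃ w ∈ integralClosure ℤ_[p] E, (1:E) = θ * w := by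
  have h := (hE.2.2.1 1 (Subalgebra.one_mem _)).mp ⟨1, Subalgebra.one_mem _, by ring⟩
  exact h

lemma vE_unit (θ : E) (hE : ArakawaQuad.Ramified p E θ) (b : ℤ_[p]) :
    ∃ w ∈ integralClosure ℤ_[p] E, vE θ b * w = 1 := by
  refine (hE.2.2.1 _ (vE_mem θ hE.2.1 b)).mpr ?_
  rintro ⟨w, hw, hvw⟩
  refine one_not_theta θ hE ⟨w - algebraMap ℤ_[p] E b, Subalgebra.sub_mem _ hw (aMemIC b), ?_⟩
  have : (1:E) = vE θ b - algebraMap ℤ_[p] E b * θ := by simp [vE]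
  rw [this, hvw]; ring

lemma vE_ne (θ : E) (hE : ArakawaQuad.Ramified p E θ) (b : ℤ_[p]) : vE θ b ≠ 0 := by
  obtain ⟨w, _, hw⟩ := vE_unit θ hE b
  intro h; rw [h, zero_mul] at hw; exact zero_ne_one hw

/-- `1 + bθ` as a unit of `E`. -/
noncomputable def vU (θ : E) (hE : ArakawaQuad.Ramified p E θ) (b : ℤ_[p]) : Eˣ :=
  Units.mk0 (vE θ b) (vE_ne θ hE b)

lemma vE_inv_mem (θ : E) (hE : ArakawaQuad.Ramified p E θ) (b : ℤ_[p]) :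
    (vE θ b)⁻¹ ∈ integralClosure ℤ_[p] E := by
  obtain ⟨w, hw, hvw⟩ := vE_unit θ hE b
  rwa [inv_eq_of_mul_eq_one_right hvw]

lemma vU_val (θ : E) (hE : ArakawaQuad.Ramified p E θ) (b : ℤ_[p]) :
    ((vU θ hE b : Eˣ) : E) = vE θ b := rfl

lemma vU_inv_val (θ : E) (hE : ArakawaQuad.Ramified p E θ) (b : ℤ_[p]) :
    (((vU θ hE b)⁻¹ : Eˣ) : E) = (vE θ b)⁻¹ := by
  simp [vU]

end Lem382
end Dev
section Dev2
namespace Lem382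
set_option linter.unusedSectionVars false

variable {p : ℕ} [Fact p.Prime]
variable {E : Type*} [Field E] [Algebra ℚ_[p] E] [Algebra ℤ_[p] E]
  [IsScalarTower ℤ_[p] ℚ_[p] E]

/-- χ(1+bθ) depends only on b mod p^n. -/
lemma chi_congr (θ : E) (hE : ArakawaQuad.Ramified p E θ) (χ : Eˣ →* ℂˣ) (n : ℕ)
    (hχtriv : ∀ u : Eˣ, ArakawaQuad.MemOEiUnits p E n u → χ u = 1)
    (b b' : ℤ_[p]) (hd : (p:ℤ_[p])^n ∣ b - b') :
    χ (vU θ hE b) = χ (vU θ hE b') := by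
  obtain ⟨m, hm⟩ := hd
  have hb : algebraMap ℤ_[p] E b
      = algebraMap ℤ_[p] E b' + (p:E)^n * algebraMap ℤ_[p] E m := by
    rw [pCast, ← map_mul, ← map_add]
    congr 1
    rw [← hm]; ring
  have h0 := vE_ne θ hE b'
  have key : vE θ b * (vE θ b')⁻¹
      = 1 + (p:E)^n * (algebraMap ℤ_[p] E m * (θ * (vE θ b')⁻¹)) := by
    field_simp
    simp only [vE, hb]; ring
  set z : Eˣ := vU θ hE b * (vU θ hE b')⁻¹ with hz
  have hzval : (z : E) = vE θ b * (vE θ b')⁻¹ := by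
    simp [hz, vU]
  have hzinvval : ((z⁻¹ : Eˣ) : E) = (vE θ b)⁻¹ * vE θ b' := by
    simp [hz, vU]; ring
  have hmem : ArakawaQuad.MemOEiUnits p E n z := by
    refine ⟨⟨1, algebraMap ℤ_[p] E m * (θ * (vE θ b')⁻¹), ?_, ?_⟩, ?_, ?_⟩
    · exact Subalgebra.mul_mem _ (aMemIC m)
        (Subalgebra.mul_mem _ hE.2.1 (vE_inv_mem θ hE b'))
    · rw [hzval, key, map_one]
    · rw [hzval]
      exact Subalgebra.mul_mem _ (vE_mem θ hE.2.1 b) (vE_inv_mem θ hE b')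
    · rw [hzinvval]
      exact Subalgebra.mul_mem _ (vE_inv_mem θ hE b) (vE_mem θ hE.2.1 b')
  have := hχtriv z hmem
  rw [hz, map_mul, map_inv] at this
  exact (mul_inv_eq_one.mp this)

/-- existence of basis coordinates -/
lemma coords (θ : E) (hθ : ArakawaQuad.IsIntBasis p E θ) {z : E}
    (hz : z ∈ integralClosure ℤ_[p] E) :
    ∃ a b : ℤ_[p], z = algebraMap ℤ_[p] E a + algebraMap ℤ_[p] E b * θ := by
  obtain ⟨⟨a, b⟩, hab, -⟩ := hθ.2 z hz
  exact ⟨a, b, hab⟩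

/-- uniqueness of basis coordinates -/
lemma coords_unique (θ : E) (hθ : ArakawaQuad.IsIntBasis p E θ) (a b a' b' : ℤ_[p])
    (h : algebraMap ℤ_[p] E a + algebraMap ℤ_[p] E b * θ
       = algebraMap ℤ_[p] E a' + algebraMap ℤ_[p] E b' * θ) : a = a' ∧ b = b' := by
  have hz : algebraMap ℤ_[p] E a + algebraMap ℤ_[p] E b * θ ∈ integralClosure ℤ_[p] E :=
    Subalgebra.add_mem _ (aMemIC a) (Subalgebra.mul_mem _ (aMemIC b) hθ.1)
  have hu := hθ.2 _ hz
  have : ((a, b) : ℤ_[p] × ℤ_[p]) = (a', b') := hu.unique rfl h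
  exact ⟨congrArg Prod.fst this, congrArg Prod.snd this⟩

end Lem382
end Dev2
section Dev3
namespace Lem382
set_option linter.unusedSectionVars false
set_option maxHeartbeats 1000000

variable {p : ℕ} [Fact p.Prime]
variable {E : Type*} [Field E] [Algebra ℚ_[p] E] [Algebra ℤ_[p] E]
  [IsScalarTower ℤ_[p] ℚ_[p] E]

/-- the master identity: χ(1+(b+p^{n-1}d)θ) = χ(1+bθ)·χ(1+p^{n-1}dθ). -/
lemma master (θ : E) (hE : ArakawaQuad.Ramified p E θ) (hθ : ArakawaQuad.IsIntBasis p E θ)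
    (χ : Eˣ →* ℂˣ) (n : ℕ) (hn : 1 ≤ n)
    (hχtriv : ∀ u : Eˣ, ArakawaQuad.MemOEiUnits p E n u → χ u = 1)
    (b d : ℤ_[p]) :
    χ (vU θ hE (b + (p:ℤ_[p])^(n-1)*d))
      = χ (vU θ hE b) * χ (vU θ hE ((p:ℤ_[p])^(n-1)*d)) := by
  obtain ⟨u₀, hu₀IC, ⟨w₀, hw₀IC, huw⟩, hθ2⟩ := hE.2.2.2
  obtain ⟨u₁, u₂, hu⟩ := coords θ hθ hu₀IC
  have hθ2' : θ^2 = (p:E) * (algebraMap ℤ_[p] E u₁ + algebraMap ℤ_[p] E u₂ * θ) := by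
    rw [hθ2, hu]
  obtain ⟨α, β, hαβ⟩ := coords θ hθ (vE_inv_mem θ hE b)
  -- the coordinate relations for the inverse of 1+bθ
  have hone : (1:E) = algebraMap ℤ_[p] E (α + p*b*β*u₁)
      + algebraMap ℤ_[p] E (β + b*α + p*b*β*u₂) * θ := by
    have h := mul_inv_cancel₀ (vE_ne θ hE b)
    rw [hαβ] at h
    rw [← h]
    simp only [vE, map_add, map_mul, map_natCast, map_one]
    linear_combination (algebraMap ℤ_[p] E b * algebraMap ℤ_[p] E β) * hθ2'
  have hone' : (1:E) = algebraMap ℤ_[p] E 1 + algebraMap ℤ_[p] E 0 * θ := by simp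
  obtain ⟨hα, hβ⟩ := coords_unique θ hθ _ _ _ _ (hone'.symm.trans hone)
  -- (so α + p b β u₁ = 1 and β + b α + p b β u₂ = 0, as elements of ℤ_p, flipped)
  set m := n - 1 with hm
  have hmn : m + 1 = n := by omega
  set A : ℤ_[p] := 1 + p^(m+1)*d*β*u₁ with hA
  set c : ℤ_[p] := d*(β*u₂ - b*β*u₁ - (p:ℤ_[p])^m*d*β*u₁) with hc
  have hαE := congrArg (algebraMap ℤ_[p] E) hα
  have hβE := congrArg (algebraMap ℤ_[p] E) hβ
  simp only [map_add, map_mul, map_natCast, map_one, map_zero] at hαE hβE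
  replace hαE := hαE.symm
  replace hβE := hβE.symm
  -- key polynomial identity
  have keyE : vE θ (b + (p:ℤ_[p])^m*d) * (algebraMap ℤ_[p] E α + algebraMap ℤ_[p] E β * θ)
      = algebraMap ℤ_[p] E A * vE θ ((p:ℤ_[p])^m*d) + (p:E)^(m+1) * algebraMap ℤ_[p] E c * θ := by
    simp only [vE, hA, hc, map_add, map_mul, map_natCast, map_one, map_pow, map_sub]
    linear_combination ((algebraMap ℤ_[p] E b + (p:E)^m * algebraMap ℤ_[p] E d)
        * algebraMap ℤ_[p] E β) * hθ2'
      + (1 + (p:E)^m * algebraMap ℤ_[p] E d * θ) * hαE + θ * hβE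
  have he := vE_ne θ hE ((p:ℤ_[p])^m*d)
  have hzid : vE θ (b + (p:ℤ_[p])^m*d) * (vE θ b)⁻¹ * (vE θ ((p:ℤ_[p])^m*d))⁻¹
      = algebraMap ℤ_[p] E A
        + (p:E)^n * (algebraMap ℤ_[p] E c * (θ * (vE θ ((p:ℤ_[p])^m*d))⁻¹)) := by
    rw [hαβ, ← hmn]
    field_simp
    linear_combination keyE
  set z : Eˣ := vU θ hE (b + (p:ℤ_[p])^m*d) * (vU θ hE b)⁻¹ * (vU θ hE ((p:ℤ_[p])^m*d))⁻¹
    with hz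
  have hzval : (z : E)
      = vE θ (b + (p:ℤ_[p])^m*d) * (vE θ b)⁻¹ * (vE θ ((p:ℤ_[p])^m*d))⁻¹ := by
    simp [hz, vU]
  have hzinvval : ((z⁻¹ : Eˣ) : E)
      = (vE θ (b + (p:ℤ_[p])^m*d))⁻¹ * (vE θ b * vE θ ((p:ℤ_[p])^m*d)) := by
    simp [hz, vU]; ring
  have hmem : ArakawaQuad.MemOEiUnits p E n z := by
    refine ⟨⟨A, algebraMap ℤ_[p] E c * (θ * (vE θ ((p:ℤ_[p])^m*d))⁻¹), ?_, ?_⟩, ?_, ?_⟩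
    · exact Subalgebra.mul_mem _ (aMemIC c)
        (Subalgebra.mul_mem _ hE.2.1 (vE_inv_mem θ hE _))
    · rw [hzval, hzid]
    · rw [hzval]
      exact Subalgebra.mul_mem _
        (Subalgebra.mul_mem _ (vE_mem θ hE.2.1 _) (vE_inv_mem θ hE _)) (vE_inv_mem θ hE _)
    · rw [hzinvval]
      exact Subalgebra.mul_mem _ (vE_inv_mem θ hE _)
        (Subalgebra.mul_mem _ (vE_mem θ hE.2.1 _) (vE_mem θ hE.2.1 _))
  have h1 := hχtriv z hmem
  rw [hz, map_mul, map_mul, map_inv, map_inv] at h1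
  rw [mul_assoc, ← mul_inv] at h1
  exact mul_inv_eq_one.mp h1

end Lem382
end Dev3
section Dev4
namespace Lem382
set_option linter.unusedSectionVars false
set_option maxHeartbeats 1000000

variable {p : ℕ} [Fact p.Prime]
variable {E : Type*} [Field E] [Algebra ℚ_[p] E] [Algebra ℤ_[p] E]
  [IsScalarTower ℤ_[p] ℚ_[p] E]

lemma chi_vU_zero (θ : E) (hE : ArakawaQuad.Ramified p E θ) (χ : Eˣ →* ℂˣ) :
    χ (vU θ hE 0) = 1 := by
  have : vU θ hE 0 = 1 := by
    apply Units.ext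
    simp [vU, vE]
  rw [this, map_one]

lemma chi_algUnit (θ : E) (hE : ArakawaQuad.Ramified p E θ) (χ : Eˣ →* ℂˣ)
    (hχQ : ArakawaQuad.TrivialOnQp p E χ) (s : ℤ_[p]) (hs : IsUnit s) (w : Eˣ)
    (hw : (w : E) = algebraMap ℤ_[p] E s) : χ w = 1 := by
  set t : ℚ_[p]ˣ := Units.map (algebraMap ℤ_[p] ℚ_[p]).toMonoidHom hs.unit with ht
  have : w = Units.map (algebraMap ℚ_[p] E).toMonoidHom t := by
    apply Units.ext
    rw [hw, ht]
    simp only [Units.coe_map, IsUnit.unit_spec]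
    exact IsScalarTower.algebraMap_apply ℤ_[p] ℚ_[p] E s
  rw [this]
  exact hχQ t

/-- Nontriviality of the additive character d ↦ χ(1+p^{n-1}dθ). -/
lemma psi_nontrivial (θ : E) (hE : ArakawaQuad.Ramified p E θ)
    (hθ : ArakawaQuad.IsIntBasis p E θ)
    (χ : Eˣ →* ℂˣ) (hχQ : ArakawaQuad.TrivialOnQp p E χ)
    (n : ℕ) (hn : 1 ≤ n) (hχn : ArakawaQuad.CondExp p E χ n) :
    ∃ d₀ : ℤ_[p], χ (vU θ hE ((p:ℤ_[p])^(n-1) * d₀)) ≠ 1 := by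
  obtain ⟨u, ⟨⟨a, w₀, hw₀, hval⟩, huIC, huinvIC⟩, hne⟩ := hχn.2 hn
  obtain ⟨x, y, hxy⟩ := coords θ hθ hw₀
  obtain ⟨s, hsdef⟩ : ∃ s : ℤ_[p], s = a + (p:ℤ_[p])^(n-1)*x := ⟨_, rfl⟩
  have hval' : (u : E) = algebraMap ℤ_[p] E s
      + algebraMap ℤ_[p] E ((p:ℤ_[p])^(n-1)*y) * θ := by
    rw [hval, hxy, hsdef]
    simp only [map_add, map_mul, map_pow, map_natCast]
    ring
  -- s is a unit of ℤ_p
  have hsu : IsUnit s := by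
    rw [PadicInt.isUnit_iff]
    have h1 := PadicInt.norm_le_one s
    have h2 : ¬ (p:ℤ_[p]) ∣ s := by
      rintro ⟨s', hs'⟩
      obtain ⟨u₀, hu₀IC, ⟨v₀, hv₀IC, huv⟩, hθ2⟩ := hE.2.2.2
      have hpE : (p : E) = θ^2 * v₀ := by
        rw [hθ2]
        linear_combination (p:E) * huv.symm
      have humem : ∃ w ∈ integralClosure ℤ_[p] E, (u:E) = θ * w := by
        refine ⟨θ * v₀ * algebraMap ℤ_[p] E s' + algebraMap ℤ_[p] E ((p:ℤ_[p])^(n-1)*y),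
          ?_, ?_⟩
        · exact Subalgebra.add_mem _
            (Subalgebra.mul_mem _ (Subalgebra.mul_mem _ hE.2.1 hv₀IC) (aMemIC s'))
            (aMemIC _)
        · rw [hval', hs', map_mul, map_natCast, hpE]
          ring
      have hucrit := (hE.2.2.1 (u:E) huIC).mp ⟨((u⁻¹ : Eˣ) : E), huinvIC, u.mul_inv⟩
      exact hucrit humem
    have h3 := (PadicInt.norm_lt_one_iff_dvd s).not.mpr h2
    push_neg at h3; linarith
  -- factor u = s · (1 + p^{n-1}(y/s)θ)
  have hss : s * (↑hsu.unit⁻¹ : ℤ_[p]) = 1 := by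
    exact hsu.mul_val_inv
  set sU : Eˣ := Units.map (algebraMap ℚ_[p] E).toMonoidHom
    (Units.map (algebraMap ℤ_[p] ℚ_[p]).toMonoidHom hsu.unit) with hsU
  have hsUval : (sU : E) = algebraMap ℤ_[p] E s := by
    rw [hsU]
    simp only [Units.coe_map, IsUnit.unit_spec]
    exact (IsScalarTower.algebraMap_apply ℤ_[p] ℚ_[p] E s).symm
  have hufact : u = sU * vU θ hE ((p:ℤ_[p])^(n-1) * (y * (↑hsu.unit⁻¹ : ℤ_[p]))) := by
    apply Units.ext
    rw [Units.val_mul, hsUval, vU_val, hval', vE]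
    have harg : s * ((p:ℤ_[p])^(n-1) * (y * (↑hsu.unit⁻¹ : ℤ_[p]))) = (p:ℤ_[p])^(n-1)*y := by
      linear_combination ((p:ℤ_[p])^(n-1) * y) * hss
    rw [mul_add, mul_one, ← mul_assoc, ← map_mul, harg]
  refine ⟨y * (↑hsu.unit⁻¹ : ℤ_[p]), fun hone => hne ?_⟩
  rw [hufact, map_mul, hone, mul_one]
  exact chi_algUnit θ hE χ hχQ s hsu sU hsUval

end Lem382
end Dev4
section Dev5
namespace Lem382
set_option linter.unusedSectionVars false
set_option maxHeartbeats 1000000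

variable {p : ℕ} [Fact p.Prime]
variable {E : Type*} [Field E] [Algebra ℚ_[p] E] [Algebra ℤ_[p] E]
  [IsScalarTower ℤ_[p] ℚ_[p] E]

/-- The shift trick: a sum of χ⁻¹ over a set of representatives stable (mod p^n)
under translation by p^{n-1}d₀ vanishes when ψ(d₀) ≠ 1. -/
lemma shift_sum (θ : E) (hE : ArakawaQuad.Ramified p E θ)
    (hθ : ArakawaQuad.IsIntBasis p E θ)
    (χ : Eˣ →* ℂˣ) (n : ℕ) (hn : 1 ≤ n)
    (hχtriv : ∀ u : Eˣ, ArakawaQuad.MemOEiUnits p E n u → χ u = 1)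
    (T' : Finset ℤ_[p]) (d₀ : ℤ_[p])
    (hψ : χ (vU θ hE ((p:ℤ_[p])^(n-1) * d₀)) ≠ 1)
    (Q : ℤ_[p] → Prop)
    (hQT : ∀ b ∈ T', Q b)
    (hrep : ∀ x, Q x → ∃! c, c ∈ T' ∧ (p:ℤ_[p])^n ∣ x - c)
    (hshift : ∀ x, Q x → Q (x + (p:ℤ_[p])^(n-1)*d₀) ∧ Q (x - (p:ℤ_[p])^(n-1)*d₀)) :
    ∑ b ∈ T', ((χ (vU θ hE b) : ℂ))⁻¹ = 0 := by
  classical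
  set ψ : ℂ := ((χ (vU θ hE ((p:ℤ_[p])^(n-1) * d₀)) : ℂˣ) : ℂ) with hψdef
  have hψne : ψ ≠ 1 := fun h => hψ (Units.ext (by rw [← hψdef, h]; rfl))
  -- forward and backward maps
  have hiex : ∀ b, Q b → ∃! c, c ∈ T' ∧ (p:ℤ_[p])^n ∣ (b + (p:ℤ_[p])^(n-1)*d₀) - c :=
    fun b hb => hrep _ (hshift b hb).1
  have hjex : ∀ b, Q b → ∃! c, c ∈ T' ∧ (p:ℤ_[p])^n ∣ (b - (p:ℤ_[p])^(n-1)*d₀) - c :=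
    fun b hb => hrep _ (hshift b hb).2
  set i : ℤ_[p] → ℤ_[p] := fun b => if h : Q b then (hiex b h).choose else 0 with hi
  set j : ℤ_[p] → ℤ_[p] := fun b => if h : Q b then (hjex b h).choose else 0 with hj
  have hispec : ∀ b ∈ T', i b ∈ T' ∧ (p:ℤ_[p])^n ∣ (b + (p:ℤ_[p])^(n-1)*d₀) - i b := by
    intro b hb
    have h := hQT b hb
    simp only [hi, dif_pos h]
    exact (hiex b h).choose_spec.1
  have hjspec : ∀ b ∈ T', j b ∈ T' ∧ (p:ℤ_[p])^n ∣ (b - (p:ℤ_[p])^(n-1)*d₀) - j b := by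
    intro b hb
    have h := hQT b hb
    simp only [hj, dif_pos h]
    exact (hjex b h).choose_spec.1
  have hji : ∀ b ∈ T', j (i b) = b := by
    intro b hb
    obtain ⟨hiT, hidvd⟩ := hispec b hb
    have hQi := hQT _ hiT
    simp only [hj, dif_pos hQi]
    refine ((hjex (i b) hQi).choose_spec.2 b ⟨hb, ?_⟩).symm
    have : (i b - (p:ℤ_[p])^(n-1)*d₀) - b = -((b + (p:ℤ_[p])^(n-1)*d₀) - i b) := by ring
    rw [this]
    exact dvd_neg.mpr hidvd
  have hij : ∀ b ∈ T', i (j b) = b := by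
    intro b hb
    obtain ⟨hjT, hjdvd⟩ := hjspec b hb
    have hQj := hQT _ hjT
    simp only [hi, dif_pos hQj]
    refine ((hiex (j b) hQj).choose_spec.2 b ⟨hb, ?_⟩).symm
    have : (j b + (p:ℤ_[p])^(n-1)*d₀) - b = -((b - (p:ℤ_[p])^(n-1)*d₀) - j b) := by ring
    rw [this]
    exact dvd_neg.mpr hjdvd
  have hval : ∀ b ∈ T', ((χ (vU θ hE b) : ℂ))⁻¹ = ψ * ((χ (vU θ hE (i b)) : ℂ))⁻¹ := by
    intro b hb
    obtain ⟨hiT, hidvd⟩ := hispec b hb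
    have h1 : χ (vU θ hE (i b)) = χ (vU θ hE (b + (p:ℤ_[p])^(n-1)*d₀)) :=
      (chi_congr θ hE χ n hχtriv _ _ (by
        have : i b - (b + (p:ℤ_[p])^(n-1)*d₀) = -((b + (p:ℤ_[p])^(n-1)*d₀) - i b) := by ring
        rw [this]; exact dvd_neg.mpr hidvd))
    rw [h1, master θ hE hθ χ n hn hχtriv b d₀]
    have hψ0 : ψ ≠ 0 := by rw [hψdef]; exact Units.ne_zero _
    push_cast
    rw [mul_inv, ← hψdef]
    field_simp
  have hsum : ∑ b ∈ T', ((χ (vU θ hE b) : ℂ))⁻¹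
      = ∑ b ∈ T', ψ * ((χ (vU θ hE b) : ℂ))⁻¹ := by
    refine Finset.sum_nbij' i j (fun b hb => (hispec b hb).1) (fun b hb => (hjspec b hb).1)
      hji hij ?_
    intro b hb
    exact hval b hb
  rw [← Finset.mul_sum] at hsum
  have : (1 - ψ) * ∑ b ∈ T', ((χ (vU θ hE b) : ℂ))⁻¹ = 0 := by
    linear_combination hsum
  rcases mul_eq_zero.mp this with h | h
  · exact absurd (sub_eq_zero.mp h).symm hψne
  · exact h

end Lem382
end Dev5
set_option maxHeartbeats 1000000 in
/-- **Lemma 3.8(2)** (ramified prime case). Let `E/ℚ_p` be a ramified quadratic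
extension with maximal ideal `𝔭 = θ𝒪_E`, `𝔭² = p𝒪_E`, and `{1, θ}` a `ℤ_p`-basis of
`𝒪_E`. Let `χ : E^× → ℂ^×` be trivial on `ℚ_p^×` with conductor exponent `n > 1`.
For `0 ≤ k ≤ n`, the sum `S_k = ∑_b χ(1+bθ)⁻¹` over a complete set of representatives
`b` of `ℤ_p/p^n ℤ_p` with `ord_p(b) = k` (for `k = n` this means `b ≡ 0 mod p^n`)
satisfies `S_k = 0` if `k < n-1`, `S_{n-1} = -1`, and `S_n = 1`. -/
theorem lemma_3_8_2 (p : ℕ) [Fact p.Prime]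
    (E : Type*) [Field E] [Algebra ℚ_[p] E] [Algebra ℤ_[p] E]
    [IsScalarTower ℤ_[p] ℚ_[p] E]
    (θ : E) (hE : Ramified p E θ) (hθ : IsIntBasis p E θ)
    (χ : Eˣ →* ℂˣ) (hχQ : TrivialOnQp p E χ)
    (n : ℕ) (hn : 1 < n) (hχn : CondExp p E χ n)
    (k : ℕ) (hk : k ≤ n) (T : Finset ℤ_[p])
    (hTmem : ∀ b ∈ T, (p : ℤ_[p]) ^ k ∣ b ∧ (k < n → ¬ (p : ℤ_[p]) ^ (k + 1) ∣ b))
    (hTrep : ∀ x : ℤ_[p], (p : ℤ_[p]) ^ k ∣ x → (k < n → ¬ (p : ℤ_[p]) ^ (k + 1) ∣ x) →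
      ∃! b, b ∈ T ∧ (p : ℤ_[p]) ^ n ∣ (x - b)) :
    (k + 1 < n → ∑ b ∈ T, (chiV χ (1 + algebraMap ℤ_[p] E b * θ))⁻¹ = 0) ∧
    (k + 1 = n → ∑ b ∈ T, (chiV χ (1 + algebraMap ℤ_[p] E b * θ))⁻¹ = -1) ∧
    (k = n → ∑ b ∈ T, (chiV χ (1 + algebraMap ℤ_[p] E b * θ))⁻¹ = 1) := by
  classical
  have hn1 : 1 ≤ n := le_of_lt hn
  have hχtriv := hχn.1
  obtain ⟨d₀, hψ⟩ := Lem382.psi_nontrivial θ hE hθ χ hχQ n hn1 hχn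
  have hchiV : ∀ b : ℤ_[p], (chiV χ (1 + algebraMap ℤ_[p] E b * θ))⁻¹
      = ((χ (Lem382.vU θ hE b) : ℂ))⁻¹ := by
    intro b
    have hne := Lem382.vE_ne θ hE b
    rw [show (1 + algebraMap ℤ_[p] E b * θ) = Lem382.vE θ b from rfl, chiV, dif_pos hne]
    rfl
  refine ⟨?_, ?_, ?_⟩
  · -- k + 1 < n : the sum vanishes
    intro hkn
    rw [Finset.sum_congr rfl (fun b _ => hchiV b)]
    refine Lem382.shift_sum θ hE hθ χ n hn1 hχtriv T d₀ hψ
      (fun x => (p:ℤ_[p])^k ∣ x ∧ ¬ (p:ℤ_[p])^(k+1) ∣ x) ?_ ?_ ?_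
    · intro b hb; exact ⟨(hTmem b hb).1, (hTmem b hb).2 (by omega)⟩
    · intro x hx; exact hTrep x hx.1 (fun _ => hx.2)
    · intro x hx
      have hdvd : (p:ℤ_[p])^(k+1) ∣ (p:ℤ_[p])^(n-1)*d₀ :=
        Dvd.dvd.mul_right (pow_dvd_pow _ (by omega)) d₀
      have hdvdk : (p:ℤ_[p])^k ∣ (p:ℤ_[p])^(n-1)*d₀ :=
        Dvd.dvd.mul_right (pow_dvd_pow _ (by omega)) d₀
      constructor
      · refine ⟨dvd_add hx.1 hdvdk, fun h => hx.2 ?_⟩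
        have h2 := dvd_sub h hdvd
        simpa using h2
      · refine ⟨dvd_sub hx.1 hdvdk, fun h => hx.2 ?_⟩
        have h2 := dvd_add h hdvd
        simpa using h2
  · -- k + 1 = n : the sum is -1
    intro hkn
    have hk' : k < n := by omega
    have h0T : (0:ℤ_[p]) ∉ T := by
      intro h0
      exact (hTmem 0 h0).2 hk' ⟨0, by ring⟩
    have hsum0 : ∑ b ∈ insert (0:ℤ_[p]) T, ((χ (Lem382.vU θ hE b) : ℂ))⁻¹ = 0 := by
      refine Lem382.shift_sum θ hE hθ χ n hn1 hχtriv _ d₀ hψ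
        (fun x => (p:ℤ_[p])^(n-1) ∣ x) ?_ ?_ ?_
      · intro b hb
        rcases Finset.mem_insert.mp hb with h | h
        · rw [h]; exact dvd_zero _
        · have h2 := (hTmem b h).1
          rwa [show k = n-1 from by omega] at h2
      · intro x hx
        by_cases hxn : (p:ℤ_[p])^n ∣ x
        · refine ⟨0, ⟨Finset.mem_insert_self _ _, by simpa using hxn⟩, ?_⟩
          rintro c ⟨hcT, hcd⟩
          rcases Finset.mem_insert.mp hcT with h | h
          · exact h
          · exfalso
            have hc : (p:ℤ_[p])^n ∣ c := by
              have h2 := dvd_sub hxn hcd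
              simpa using h2
            refine (hTmem c h).2 hk' ?_
            rwa [hkn]
        · have hx1 : (p:ℤ_[p])^k ∣ x := by
            rwa [show k = n-1 from by omega]
          obtain ⟨b, ⟨hbT, hbd⟩, hbu⟩ := hTrep x hx1 (fun _ => by rwa [hkn])
          refine ⟨b, ⟨Finset.mem_insert_of_mem hbT, hbd⟩, ?_⟩
          rintro c ⟨hcT, hcd⟩
          rcases Finset.mem_insert.mp hcT with h | h
          · exfalso
            rw [h] at hcd
            exact hxn (by simpa using hcd)
          · exact hbu c ⟨h, hcd⟩
      · intro x hx
        have hdvd : (p:ℤ_[p])^(n-1) ∣ (p:ℤ_[p])^(n-1)*d₀ := dvd_mul_right _ _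
        exact ⟨dvd_add hx hdvd, dvd_sub hx hdvd⟩
    rw [Finset.sum_congr rfl (fun b _ => hchiV b)]
    have h2 : ∑ b ∈ insert (0:ℤ_[p]) T, ((χ (Lem382.vU θ hE b) : ℂ))⁻¹
        = 1 + ∑ b ∈ T, ((χ (Lem382.vU θ hE b) : ℂ))⁻¹ := by
      rw [Finset.sum_insert h0T, Lem382.chi_vU_zero θ hE χ]
      norm_num
    rw [h2] at hsum0
    linear_combination hsum0
  · -- k = n : the sum is 1
    intro hkn
    obtain ⟨b₀, ⟨hb₀T, hb₀d⟩, hbu⟩ :=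
      hTrep 0 (dvd_zero _) (fun hlt => absurd hkn (Nat.ne_of_lt hlt))
    have hTeq : T = {b₀} := by
      apply Finset.eq_singleton_iff_unique_mem.mpr
      refine ⟨hb₀T, ?_⟩
      intro c hcT
      have hc : (p:ℤ_[p])^n ∣ c := by
        have h2 := (hTmem c hcT).1
        rwa [← hkn]
      exact hbu c ⟨hcT, by rw [zero_sub]; exact dvd_neg.mpr hc⟩
    rw [hTeq, Finset.sum_singleton, hchiV b₀]
    have hcon : χ (Lem382.vU θ hE b₀) = χ (Lem382.vU θ hE 0) :=
      Lem382.chi_congr θ hE χ n hχtriv b₀ 0 (by simpa using dvd_neg.mpr hb₀d)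
    rw [hcon, Lem382.chi_vU_zero θ hE χ]
    norm_num
end

section
/- For every integer $i \ge 1$, the subgroup $\mathcal{O}_{E,i}^\times$ has finite index in $\mathcal{O}_E^\times$ equal to $p^{\,i}$. -/
open scoped Classical

open ArakawaQuad

/-!
Every `z ∈ 𝒪_E` is uniquely `a + bθ` with `a b : ℤ_p`. Over `ℚ_p` this holds because `θ ∉ ℚ_p`;
the coordinates are then integral by descent: as `p ∈ θ²𝒪_E`, an equation `p z = a + bθ` with
`z ∈ 𝒪_E` forces `p ∣ a` and `p ∣ b`. In these coordinates `a + bθ` is a unit of `𝒪_E` iff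
`a ∈ ℤ_p^×`, and it lies in `𝒪_{E,i}` iff `p^i ∣ b`. Writing `θ² = p(e + fθ)`, if
`(1 + cθ)(s + tθ) = x + yθ` then `t (1 + p(cf - c²e)) = y - cx`, so `(1 + cθ)⁻¹(x + yθ) ∈ 𝒪_{E,i}^×`
iff `p^i ∣ y - cx`: the units `1 + cθ`, `c ∈ ℤ/p^i`, represent each coset of `𝒪_{E,i}^×` in
`𝒪_E^×` exactly once.
-/

namespace PadicInt

variable {p : ℕ} [Fact p.Prime]

theorem not_isUnit_iff_dvd {z : ℤ_[p]} : ¬IsUnit z ↔ (p : ℤ_[p]) ∣ z :=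
  not_isUnit_iff.trans (norm_lt_one_iff_dvd z)

theorem isUnit_one_add_natCast_mul (z : ℤ_[p]) : IsUnit (1 + p * z) := by
  by_contra h
  have h1 : (p : ℤ_[p]) ∣ 1 := (dvd_add_left (dvd_mul_right _ z)).mp (not_isUnit_iff_dvd.mp h)
  exact prime_p.not_isUnit (isUnit_of_dvd_one h1)

theorem pow_dvd_iff_toZModPow_eq_zero (n : ℕ) (z : ℤ_[p]) :
    (p : ℤ_[p]) ^ n ∣ z ↔ toZModPow n z = 0 := by
  rw [← RingHom.mem_ker, ker_toZModPow, Ideal.mem_span_singleton]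

end PadicInt

theorem Padic.norm_p_pow_mul_le_one {p : ℕ} [Fact p.Prime] {x : ℚ_[p]} {n : ℕ}
    (h : ‖x‖ ≤ (p : ℝ) ^ n) : ‖(p : ℚ_[p]) ^ n * x‖ ≤ 1 := by
  rw [norm_mul, norm_pow, Padic.norm_p, inv_pow]
  exact inv_mul_le_one_of_le₀ h (by positivity)

theorem Subgroup.index_eq_card_of_inv_mul_mem {G X : Type*} [Group G] {H : Subgroup G}
    (r : X → G) (hinj : ∀ x y, (r x)⁻¹ * r y ∈ H → x = y) (hsurj : ∀ g, ∃ x, (r x)⁻¹ * g ∈ H) :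
    H.index = Nat.card X := by
  rw [Subgroup.index_eq_card]
  refine (Nat.card_eq_of_bijective (fun x => (r x : G ⧸ H))
    ⟨fun x y h => hinj x y (QuotientGroup.eq.mp h), fun q => ?_⟩).symm
  obtain ⟨g, rfl⟩ := QuotientGroup.mk_surjective q
  obtain ⟨x, hx⟩ := hsurj g
  exact ⟨x, QuotientGroup.eq.mpr hx⟩

namespace ArakawaQuad

section Coords

variable {p : ℕ} [Fact p.Prime] {E : Type*} [Field E] [Algebra ℤ_[p] E]

noncomputable def ofCoords (θ : E) (a b : ℤ_[p]) : E :=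
  algebraMap ℤ_[p] E a + algebraMap ℤ_[p] E b * θ

theorem ofCoords_mem {θ : E} (hθ : θ ∈ integralClosure ℤ_[p] E) (a b : ℤ_[p]) :
    ofCoords θ a b ∈ integralClosure ℤ_[p] E :=
  add_mem (Subalgebra.algebraMap_mem _ a) (mul_mem (Subalgebra.algebraMap_mem _ b) hθ)

theorem ofCoords_mul {θ : E} {e f : ℤ_[p]} (hθ : θ ^ 2 = p * ofCoords θ e f) (a b c d : ℤ_[p]) :
    ofCoords θ a b * ofCoords θ c d =
      ofCoords θ (a * c + (p : ℤ_[p]) * e * (b * d))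
        (a * d + b * c + (p : ℤ_[p]) * f * (b * d)) := by
  simp only [ofCoords, map_add, map_mul, map_natCast] at hθ ⊢
  linear_combination (algebraMap ℤ_[p] E b * algebraMap ℤ_[p] E d) * hθ

theorem IsIntBasis.exists_ofCoords {θ : E} (hB : IsIntBasis p E θ) {z : E}
    (hz : z ∈ integralClosure ℤ_[p] E) : ∃ a b : ℤ_[p], z = ofCoords θ a b :=
  let ⟨ab, h, _⟩ := hB.2 z hz
  ⟨ab.1, ab.2, h⟩

theorem IsIntBasis.ofCoords_inj {θ : E} (hB : IsIntBasis p E θ) {a b c d : ℤ_[p]}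
    (h : ofCoords θ a b = ofCoords θ c d) : a = c ∧ b = d :=
  Prod.ext_iff.mp ((hB.2 _ (ofCoords_mem hB.1 a b)).unique (y₁ := (a, b)) (y₂ := (c, d)) rfl h)

theorem MemOEi.mem_integralClosure {i : ℕ} {z : E} (hz : MemOEi p E i z) :
    z ∈ integralClosure ℤ_[p] E := by
  obtain ⟨a, w, hw, rfl⟩ := hz
  exact add_mem (Subalgebra.algebraMap_mem _ a)
    (mul_mem (pow_mem (Subalgebra.natCast_mem _ p) i) hw)

theorem IsIntBasis.memOEi_ofCoords_iff {θ : E} (hB : IsIntBasis p E θ) (i : ℕ) (a b : ℤ_[p]) :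
    MemOEi p E i (ofCoords θ a b) ↔ (p : ℤ_[p]) ^ i ∣ b := by
  constructor
  · rintro ⟨c, w, hw, hcw⟩
    obtain ⟨s, t, rfl⟩ := hB.exists_ofCoords hw
    have h : ofCoords θ a b = ofCoords θ (c + (p : ℤ_[p]) ^ i * s) ((p : ℤ_[p]) ^ i * t) := by
      rw [hcw]
      simp only [ofCoords, map_add, map_mul, map_pow, map_natCast]
      ring
    exact ⟨t, (hB.ofCoords_inj h).2⟩
  · rintro ⟨t, rfl⟩
    refine ⟨a, algebraMap ℤ_[p] E t * θ, mul_mem (Subalgebra.algebraMap_mem _ t) hB.1, ?_⟩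
    simp only [ofCoords, map_mul, map_pow, map_natCast]
    ring

def OEi (p : ℕ) [Fact p.Prime] (E : Type*) [Field E] [Algebra ℤ_[p] E] (i : ℕ) :
    Subalgebra ℤ_[p] E where
  carrier := {z | MemOEi p E i z}
  mul_mem' := by
    rintro _ _ ⟨a, w, hw, rfl⟩ ⟨c, w', hw', rfl⟩
    refine ⟨a * c, algebraMap ℤ_[p] E a * w' + algebraMap ℤ_[p] E c * w + p ^ i * (w * w'),
      ?_, by rw [map_mul]; ring⟩
    have hp : (p : E) ^ i ∈ integralClosure ℤ_[p] E := pow_mem (Subalgebra.natCast_mem _ p) i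
    have := Subalgebra.algebraMap_mem (integralClosure ℤ_[p] E)
    exact add_mem (add_mem (mul_mem (this a) hw') (mul_mem (this c) hw))
      (mul_mem hp (mul_mem hw hw'))
  add_mem' := by
    rintro _ _ ⟨a, w, hw, rfl⟩ ⟨c, w', hw', rfl⟩
    exact ⟨a + c, w + w', add_mem hw hw', by rw [map_add]; ring⟩
  algebraMap_mem' a := ⟨a, 0, zero_mem _, by simp⟩

theorem memOEi_inv {i : ℕ} {u : Eˣ} {a : ℤ_[p]} (ha : IsUnit a) {w : E}
    (hw : w ∈ integralClosure ℤ_[p] E) (hu : (u : E) = algebraMap ℤ_[p] E a + p ^ i * w)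
    (hinv : ((u⁻¹ : Eˣ) : E) ∈ integralClosure ℤ_[p] E) : MemOEi p E i ((u⁻¹ : Eˣ) : E) := by
  obtain ⟨b, hba⟩ := ha.exists_left_inv
  have hb : algebraMap ℤ_[p] E b * algebraMap ℤ_[p] E a = 1 := by rw [← map_mul, hba, map_one]
  -- `u⁻¹ = a⁻¹ (u - p^i w) u⁻¹`
  refine ⟨b, -(algebraMap ℤ_[p] E b * w * (u⁻¹ : Eˣ)),
    neg_mem (mul_mem (mul_mem (Subalgebra.algebraMap_mem _ b) hw) hinv), ?_⟩
  linear_combination algebraMap ℤ_[p] E b * u.mul_inv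
    - (algebraMap ℤ_[p] E b * (u⁻¹ : Eˣ)) * hu - ((u⁻¹ : Eˣ) : E) * hb

theorem IsIntBasis.mul_eq_sub_of_ofCoords_one_mul {θ : E} (hB : IsIntBasis p E θ) {e f : ℤ_[p]}
    (hθ : θ ^ 2 = p * ofCoords θ e f) {c s t x y : ℤ_[p]}
    (h : ofCoords θ 1 c * ofCoords θ s t = ofCoords θ x y) :
    t * (1 + p * (c * f - c ^ 2 * e)) = y - c * x := by
  rw [ofCoords_mul hθ] at h
  obtain ⟨h1, h2⟩ := hB.ofCoords_inj h
  linear_combination h2 - c * h1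

end Coords

theorem natCast_p_ne_zero {p : ℕ} [Fact p.Prime] {E : Type*} [Ring E] [Nontrivial E]
    [Algebra ℚ_[p] E] : (p : E) ≠ 0 := by
  rw [← map_natCast (algebraMap ℚ_[p] E)]
  exact (map_ne_zero _).mpr (Nat.cast_ne_zero.mpr (Fact.out : p.Prime).ne_zero)

section Ramified

variable {p : ℕ} [Fact p.Prime] {E : Type*} [Field E] [Algebra ℚ_[p] E] [Algebra ℤ_[p] E] {θ : E}

theorem Ramified.theta_mem (hE : Ramified p E θ) : θ ∈ integralClosure ℤ_[p] E := hE.2.1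

theorem Ramified.exists_mul_eq_one_iff (hE : Ramified p E θ) {z : E}
    (hz : z ∈ integralClosure ℤ_[p] E) :
    (∃ w ∈ integralClosure ℤ_[p] E, z * w = 1) ↔ ¬∃ w ∈ integralClosure ℤ_[p] E, z = θ * w :=
  hE.2.2.1 z hz

theorem Ramified.not_exists_theta_mul_eq_one (hE : Ramified p E θ) :
    ¬∃ w ∈ integralClosure ℤ_[p] E, θ * w = 1 := fun h =>
  (hE.exists_mul_eq_one_iff hE.theta_mem).mp h ⟨1, one_mem _, (mul_one θ).symm⟩

theorem Ramified.exists_natCast_eq_theta_sq_mul (hE : Ramified p E θ) :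
    ∃ w ∈ integralClosure ℤ_[p] E, (p : E) = θ ^ 2 * w := by
  obtain ⟨-, -, -, u, -, ⟨v, hv, huv⟩, hθ⟩ := hE
  exact ⟨v, hv, by rw [hθ, mul_assoc, huv, mul_one]⟩

theorem Ramified.theta_ne_zero (hE : Ramified p E θ) : θ ≠ 0 := by
  rintro rfl
  obtain ⟨w, -, hw⟩ := hE.exists_natCast_eq_theta_sq_mul
  exact natCast_p_ne_zero (by simpa using hw)

theorem Ramified.not_exists_theta_eq_natCast_mul (hE : Ramified p E θ) :
    ¬∃ w ∈ integralClosure ℤ_[p] E, θ = p * w := by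
  rintro ⟨w, hw, hθw⟩
  obtain ⟨v, hv, hpv⟩ := hE.exists_natCast_eq_theta_sq_mul
  refine hE.not_exists_theta_mul_eq_one ⟨v * w, mul_mem hv hw, ?_⟩
  apply mul_left_cancel₀ hE.theta_ne_zero
  linear_combination -hθw - w * hpv

theorem Ramified.exists_algebraMap_eq_theta_mul_iff (hE : Ramified p E θ) (a : ℤ_[p]) :
    (∃ w ∈ integralClosure ℤ_[p] E, algebraMap ℤ_[p] E a = θ * w) ↔ (p : ℤ_[p]) ∣ a := by
  constructor
  · intro h
    by_contra hpa
    obtain ⟨b, hab⟩ := (not_not.mp (PadicInt.not_isUnit_iff_dvd.not.mpr hpa)).exists_right_inv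
    refine (hE.exists_mul_eq_one_iff (Subalgebra.algebraMap_mem _ a)).mp
      ⟨algebraMap ℤ_[p] E b, Subalgebra.algebraMap_mem _ b, ?_⟩ h
    rw [← map_mul, hab, map_one]
  · rintro ⟨c, rfl⟩
    obtain ⟨v, hv, hpv⟩ := hE.exists_natCast_eq_theta_sq_mul
    refine ⟨θ * v * algebraMap ℤ_[p] E c,
      mul_mem (mul_mem hE.theta_mem hv) (Subalgebra.algebraMap_mem _ c), ?_⟩
    rw [map_mul, map_natCast, hpv]
    ring

theorem Ramified.exists_ofCoords_mul_eq_one_iff (hE : Ramified p E θ) (a b : ℤ_[p]) :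
    (∃ w ∈ integralClosure ℤ_[p] E, ofCoords θ a b * w = 1) ↔ IsUnit a := by
  rw [hE.exists_mul_eq_one_iff (ofCoords_mem hE.theta_mem a b), ← not_iff_not, not_not,
    PadicInt.not_isUnit_iff_dvd, ← hE.exists_algebraMap_eq_theta_mul_iff]
  have hb := Subalgebra.algebraMap_mem (integralClosure ℤ_[p] E) b
  constructor
  · rintro ⟨w, hw, h⟩
    exact ⟨w - algebraMap ℤ_[p] E b, sub_mem hw hb, by rw [ofCoords] at h; linear_combination h⟩
  · rintro ⟨w, hw, h⟩
    exact ⟨w + algebraMap ℤ_[p] E b, add_mem hw hb, by rw [ofCoords, h]; ring⟩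

theorem Ramified.dvd_of_natCast_mul_eq_ofCoords (hE : Ramified p E θ) {z : E}
    (hz : z ∈ integralClosure ℤ_[p] E) {a b : ℤ_[p]} (h : p * z = ofCoords θ a b) :
    (p : ℤ_[p]) ∣ a ∧ (p : ℤ_[p]) ∣ b := by
  obtain ⟨v, hv, hpv⟩ := hE.exists_natCast_eq_theta_sq_mul
  have hb := Subalgebra.algebraMap_mem (integralClosure ℤ_[p] E) b
  obtain ⟨a', rfl⟩ := (hE.exists_algebraMap_eq_theta_mul_iff a).mp
    ⟨θ * v * z - algebraMap ℤ_[p] E b, sub_mem (mul_mem (mul_mem hE.theta_mem hv) hz) hb,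
      by rw [ofCoords] at h; linear_combination z * hpv - h⟩
  refine ⟨dvd_mul_right _ _, PadicInt.not_isUnit_iff_dvd.mp fun hbu => ?_⟩
  obtain ⟨b', hbb'⟩ := hbu.exists_left_inv
  have hb' : algebraMap ℤ_[p] E b' * algebraMap ℤ_[p] E b = 1 := by rw [← map_mul, hbb', map_one]
  refine hE.not_exists_theta_eq_natCast_mul ⟨algebraMap ℤ_[p] E b' * (z - algebraMap ℤ_[p] E a'),
    mul_mem (Subalgebra.algebraMap_mem _ b') (sub_mem hz (Subalgebra.algebraMap_mem _ a')), ?_⟩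
  rw [ofCoords, map_mul, map_natCast] at h
  linear_combination (-algebraMap ℤ_[p] E b') * h - θ * hb'

theorem Ramified.exists_ofCoords_of_pow_mul (hE : Ramified p E θ) {z : E}
    (hz : z ∈ integralClosure ℤ_[p] E) (n : ℕ)
    (h : ∃ a b : ℤ_[p], (p : E) ^ n * z = ofCoords θ a b) :
    ∃ a b : ℤ_[p], z = ofCoords θ a b := by
  induction n with
  | zero => simpa using h
  | succ n ih =>
    obtain ⟨a, b, hab⟩ := h
    have hpz : (p : E) ^ n * z ∈ integralClosure ℤ_[p] E :=
      mul_mem (pow_mem (Subalgebra.natCast_mem _ p) n) hz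
    obtain ⟨⟨a', rfl⟩, ⟨b', rfl⟩⟩ := hE.dvd_of_natCast_mul_eq_ofCoords hpz (by rw [← hab]; ring)
    refine ih ⟨a', b', mul_left_cancel₀ (natCast_p_ne_zero (p := p)) ?_⟩
    rw [ofCoords, map_mul, map_mul, map_natCast] at hab
    rw [ofCoords]
    linear_combination hab

theorem Ramified.isUnit_of_mem_OEUnits (hE : Ramified p E θ) {k : Eˣ} (hk : k ∈ OEUnits p E)
    {x y : ℤ_[p]} (hxy : (k : E) = ofCoords θ x y) : IsUnit x :=
  (hE.exists_ofCoords_mul_eq_one_iff x y).mp ⟨_, hk.2, by rw [← hxy, Units.mul_inv]⟩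

theorem Ramified.exists_mem_OEUnits_eq_ofCoords_one (hE : Ramified p E θ) (c : ℤ_[p]) :
    ∃ g ∈ OEUnits p E, (g : E) = ofCoords θ 1 c := by
  obtain ⟨w, hw, hmul⟩ := (hE.exists_ofCoords_mul_eq_one_iff 1 c).mpr isUnit_one
  exact ⟨Units.mkOfMulEqOne _ w hmul, ⟨ofCoords_mem hE.theta_mem 1 c, hw⟩, rfl⟩

end Ramified

section ScalarTower

variable {p : ℕ} [Fact p.Prime] {E : Type*} [Field E] [Algebra ℚ_[p] E] [Algebra ℤ_[p] E]
  [IsScalarTower ℤ_[p] ℚ_[p] E] {θ : E}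

theorem algebraMap_padicInt_apply (a : ℤ_[p]) :
    algebraMap ℤ_[p] E a = algebraMap ℚ_[p] E a := by
  rw [IsScalarTower.algebraMap_apply ℤ_[p] ℚ_[p] E, PadicInt.algebraMap_apply]

theorem algebraMap_padicInt_mk (x : ℚ_[p]) (hx : ‖x‖ ≤ 1) :
    algebraMap ℤ_[p] E ⟨x, hx⟩ = algebraMap ℚ_[p] E x :=
  algebraMap_padicInt_apply _

theorem Ramified.theta_notMem_range (hE : Ramified p E θ) :
    θ ∉ Set.range (algebraMap ℚ_[p] E) := by
  rintro ⟨c, hc⟩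
  by_cases hc1 : ‖c‖ ≤ 1
  · have hθ : algebraMap ℤ_[p] E (⟨c, hc1⟩ : ℤ_[p]) = θ :=
      (algebraMap_padicInt_mk c hc1).trans hc
    obtain ⟨c', hc'⟩ := (hE.exists_algebraMap_eq_theta_mul_iff _).mp
      ⟨1, one_mem _, hθ.trans (mul_one θ).symm⟩
    refine hE.not_exists_theta_eq_natCast_mul
      ⟨algebraMap ℤ_[p] E c', Subalgebra.algebraMap_mem _ c', ?_⟩
    rw [← hθ, hc', map_mul, map_natCast]
  · have hinv : ‖c⁻¹‖ ≤ 1 := by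
      rw [norm_inv]
      exact inv_le_one_of_one_le₀ (not_le.mp hc1).le
    have hc0 : c ≠ 0 := by
      rintro rfl
      exact hc1 (by simp)
    refine hE.not_exists_theta_mul_eq_one
      ⟨algebraMap ℤ_[p] E (⟨c⁻¹, hinv⟩ : ℤ_[p]), Subalgebra.algebraMap_mem _ _, ?_⟩
    rw [algebraMap_padicInt_mk, ← hc, ← map_mul]
    exact (congrArg _ (mul_inv_cancel₀ hc0)).trans (map_one _)

theorem Ramified.linearIndependent (hE : Ramified p E θ) :
    LinearIndependent ℚ_[p] ![(1 : E), θ] := by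
  refine (LinearIndependent.pair_iff' one_ne_zero).mpr fun c hc => hE.theta_notMem_range ⟨c, ?_⟩
  rwa [Algebra.algebraMap_eq_smul_one]

theorem Ramified.ofCoords_inj (hE : Ramified p E θ) {a b c d : ℤ_[p]}
    (h : ofCoords θ a b = ofCoords θ c d) : a = c ∧ b = d := by
  have h0 := LinearIndependent.pair_iff.mp hE.linearIndependent
    ((a : ℚ_[p]) - c) ((b : ℚ_[p]) - d)
    (by
      simp only [ofCoords, algebraMap_padicInt_apply] at h
      rw [Algebra.smul_def, Algebra.smul_def, map_sub, map_sub]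
      linear_combination h)
  exact ⟨PadicInt.ext (sub_eq_zero.mp h0.1), PadicInt.ext (sub_eq_zero.mp h0.2)⟩

theorem Ramified.exists_rat_coords (hE : Ramified p E θ) (z : E) :
    ∃ α β : ℚ_[p], z = algebraMap ℚ_[p] E α + algebraMap ℚ_[p] E β * θ := by
  have : FiniteDimensional ℚ_[p] E := .of_finrank_pos (by rw [hE.1]; norm_num)
  have hspan := hE.linearIndependent.span_eq_top_of_card_eq_finrank' (by simp [hE.1])
  rw [Matrix.range_cons_cons_empty] at hspan
  obtain ⟨α, β, h⟩ := Submodule.mem_span_pair.mp (hspan ▸ Submodule.mem_top (x := z))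
  exact ⟨α, β, by rw [← h, Algebra.smul_def, Algebra.smul_def, mul_one]⟩

theorem Ramified.exists_ofCoords (hE : Ramified p E θ) {z : E}
    (hz : z ∈ integralClosure ℤ_[p] E) : ∃ a b : ℤ_[p], z = ofCoords θ a b := by
  obtain ⟨α, β, hz'⟩ := hE.exists_rat_coords z
  obtain ⟨n, hn⟩ := pow_unbounded_of_one_lt (max ‖α‖ ‖β‖)
    (Nat.one_lt_cast.mpr (Fact.out : p.Prime).one_lt)
  refine hE.exists_ofCoords_of_pow_mul hz n
    ⟨(⟨_, Padic.norm_p_pow_mul_le_one ((le_max_left _ _).trans hn.le)⟩ : ℤ_[p]),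
      (⟨_, Padic.norm_p_pow_mul_le_one ((le_max_right _ _).trans hn.le)⟩ : ℤ_[p]), ?_⟩
  simp only [ofCoords, algebraMap_padicInt_mk, map_mul, map_pow, map_natCast, hz']
  ring

theorem Ramified.isIntBasis (hE : Ramified p E θ) : IsIntBasis p E θ := by
  refine ⟨hE.theta_mem, fun z hz => ?_⟩
  obtain ⟨a, b, rfl⟩ := hE.exists_ofCoords hz
  refine ⟨(a, b), rfl, fun cd h => ?_⟩
  obtain ⟨h1, h2⟩ := hE.ofCoords_inj h
  exact Prod.ext h1.symm h2.symm

theorem Ramified.exists_sq_eq (hE : Ramified p E θ) :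
    ∃ e f : ℤ_[p], θ ^ 2 = p * ofCoords θ e f := by
  obtain ⟨u, hu, -, hθ⟩ := hE.2.2.2
  obtain ⟨e, f, rfl⟩ := hE.exists_ofCoords hu
  exact ⟨e, f, hθ⟩

theorem Ramified.mem_units_OEi_iff (hE : Ramified p E θ) (i : ℕ) (u : Eˣ) :
    u ∈ (OEi p E i).toSubmonoid.units ↔ MemOEi p E i u ∧ u ∈ OEUnits p E := by
  rw [Submonoid.mem_units_iff]
  refine ⟨fun ⟨h, hinv⟩ => ⟨h, h.mem_integralClosure, hinv.mem_integralClosure⟩,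
    fun ⟨h, hu, hinv⟩ => ⟨h, ?_⟩⟩
  obtain ⟨x, y, hxy⟩ := hE.exists_ofCoords hu
  obtain ⟨t, rfl⟩ := (hE.isIntBasis.memOEi_ofCoords_iff i x y).mp (hxy ▸ h)
  refine memOEi_inv (hE.isUnit_of_mem_OEUnits ⟨hu, hinv⟩ hxy)
    (mul_mem (Subalgebra.algebraMap_mem _ t) hE.theta_mem) ?_ hinv
  rw [hxy, ofCoords, map_mul, map_pow, map_natCast]
  ring

theorem Ramified.inv_mul_mem_units_OEi_iff (hE : Ramified p E θ) (i : ℕ) {g k : Eˣ}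
    (hg : g ∈ OEUnits p E) (hk : k ∈ OEUnits p E) {c x y : ℤ_[p]}
    (hgc : (g : E) = ofCoords θ 1 c) (hkxy : (k : E) = ofCoords θ x y) :
    g⁻¹ * k ∈ (OEi p E i).toSubmonoid.units ↔ (p : ℤ_[p]) ^ i ∣ y - c * x := by
  have hB := hE.isIntBasis
  obtain ⟨e, f, hθ⟩ := hE.exists_sq_eq
  have hmem : g⁻¹ * k ∈ OEUnits p E := mul_mem (inv_mem hg) hk
  obtain ⟨s, t, hst⟩ := hB.exists_ofCoords hmem.1
  have key := hB.mul_eq_sub_of_ofCoords_one_mul hθ (s := s) (t := t) (x := x) (y := y)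
    (by rw [← hgc, ← hst, ← hkxy, ← Units.val_mul, mul_inv_cancel_left])
  rw [hE.mem_units_OEi_iff, hst, hB.memOEi_ofCoords_iff, ← key,
    (PadicInt.isUnit_one_add_natCast_mul _).dvd_mul_right, and_iff_left hmem]

end ScalarTower

end ArakawaQuad

theorem lemma_3_9_general (p : ℕ) [Fact p.Prime]
    (E : Type*) [Field E] [Algebra ℚ_[p] E] [Algebra ℤ_[p] E]
    [IsScalarTower ℤ_[p] ℚ_[p] E]
    (θ : E) (hE : Ramified p E θ) (i : ℕ) :
    ∃ H : Subgroup Eˣ,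
      (∀ u : Eˣ, u ∈ H ↔ (MemOEi p E i ↑u ∧ u ∈ OEUnits p E)) ∧
      H.relIndex (OEUnits p E) = p ^ i := by
  refine ⟨(OEi p E i).toSubmonoid.units, hE.mem_units_OEi_iff i, ?_⟩
  choose g hgK hg using hE.exists_mem_OEUnits_eq_ofCoords_one
  let r : ZMod (p ^ i) → OEUnits p E := fun c => ⟨g c.val, hgK _⟩
  rw [Subgroup.relIndex, Subgroup.index_eq_card_of_inv_mul_mem r, Nat.card_zmod]
  · intro c c' h
    have hdvd := (hE.inv_mul_mem_units_OEi_iff i (hgK _) (hgK _) (hg _) (hg _)).mp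
      (Subgroup.mem_subgroupOf.mp h)
    rw [PadicInt.pow_dvd_iff_toZModPow_eq_zero] at hdvd
    simp only [map_sub, map_mul, map_one, map_natCast, ZMod.natCast_zmod_val] at hdvd
    linear_combination -hdvd
  · intro k
    obtain ⟨x, y, hxy⟩ := hE.exists_ofCoords k.2.1
    obtain ⟨x', hx'⟩ := (hE.isUnit_of_mem_OEUnits k.2 hxy).exists_left_inv
    refine ⟨PadicInt.toZModPow i (y * x'), Subgroup.mem_subgroupOf.mpr
      ((hE.inv_mul_mem_units_OEi_iff i (hgK _) k.2 (hg _) hxy).mpr ?_)⟩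
    have hx'' : PadicInt.toZModPow i x' * PadicInt.toZModPow i x = 1 := by
      rw [← map_mul, hx', map_one]
    rw [PadicInt.pow_dvd_iff_toZModPow_eq_zero]
    simp only [map_sub, map_mul, map_natCast, ZMod.natCast_zmod_val]
    linear_combination -PadicInt.toZModPow i y * hx''

/-- **Lemma 3.9** (ramified prime case, index form). Let `E/ℚ_p` be a ramified
quadratic extension with maximal ideal `𝔭 = θ𝒪_E` satisfying `𝔭² = p𝒪_E`. For every
integer `i ≥ 1`, the subgroup `𝒪_{E,i}^× = 𝒪_{E,i} ∩ 𝒪_E^×` has finite index in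
`𝒪_E^×` equal to `p^i`. -/
theorem lemma_3_9 (p : ℕ) [Fact p.Prime]
    (E : Type*) [Field E] [Algebra ℚ_[p] E] [Algebra ℤ_[p] E]
    [IsScalarTower ℤ_[p] ℚ_[p] E]
    (θ : E) (hE : Ramified p E θ) (i : ℕ) (hi : 1 ≤ i) :
    ∃ H : Subgroup Eˣ,
      (∀ u : Eˣ, u ∈ H ↔ (MemOEi p E i ↑u ∧ u ∈ OEUnits p E)) ∧
      H.relIndex (OEUnits p E) = p ^ i :=
  lemma_3_9_general p E θ hE i
end
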